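/- Let Δ ≥ 4 be even and let G be a connected infinite Δ-regular graph. Suppose that for every finite subset C of V(G): (1) there are two disjoint non-empty subsets S_B and S_AB of V(G) − C such that deg_{S_B}(v) ≥ Δ/2 for every v ∈ S_AB and deg_{S_B}(u) = deg_{S_AB}(u) = Δ/2 for every u ∈ S_B; and (2) G − C has a (Δ/2)-regular subgraph. Then Ω_G ⊆ Ω_{L_Δ}. -/

import Mathlib

/-!
Outside `Ω_{L_Δ}` either `q > 1/2`, or `r < q/2` and `2q + 2r > 1`. A vertex with at least half
of its neighbours playing `B` then never switches to `A`: `B` beats `A` when `q > 1/2`, and `AB`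
beats `A` when `r < q/2`. A vertex of `S_B` has all its neighbours in `S_B ∪ S_AB`; if none of
them plays `A`, it moreover prefers `B` to `AB`. So "`S_B` plays `B` and `S_AB` avoids `A`" is
preserved by best-response updates, and choosing `S_B`, `S_AB` away from the finite seed, the
vertices of `S_B` never adopt `A`.
-/


namespace Contagion

open scoped BigOperators

/-- The three strategies in the contagion game. -/
inductive Strat
  | A | B | AB
deriving DecidableEq

/-- Pairwise payoff to a player using the first strategy against a neighbor
using the second strategy, in the contagion game with parameters `q, r`. -/
noncomputable def pairPayoff (q r : ℝ) : Strat → Strat → ℝ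
  | .A, .A => 1 - q
  | .A, .B => 0
  | .A, .AB => 1 - q
  | .B, .A => 0
  | .B, .B => q
  | .B, .AB => q
  | .AB, .A => 1 - q - r
  | .AB, .B => q - r
  | .AB, .AB => max q (1 - q) - r

variable {V : Type*}

/-- Total payoff to vertex `v` for playing strategy `s` against profile `σ`. -/
noncomputable def totalPayoff (G : SimpleGraph V) (q r : ℝ) (σ : V → Strat)
    (v : V) (s : Strat) : ℝ :=
  ∑ᶠ u ∈ G.neighborSet v, pairPayoff q r s (σ u)

/-- `s` is a best response of vertex `v` to the profile `σ`. -/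
def IsBestResponse (G : SimpleGraph V) (q r : ℝ) (σ : V → Strat) (v : V) (s : Strat) : Prop :=
  ∀ s' : Strat, totalPayoff G q r σ v s' ≤ totalPayoff G q r σ v s

/-- Strategy `A` becomes epidemic in the contagion game `(G, q, r)`:
there are a finite initial set `S₀` (playing `A`, everybody else playing `B`) and a
sequence `α` of vertices in which every vertex appears at least once, such that updating
at step `n` the vertex `α n` to a best response makes every vertex eventually adopt `A`. -/
def Epidemic (G : SimpleGraph V) (q r : ℝ) : Prop :=
  ∃ (S₀ : Set V) (α : ℕ → V) (σ : ℕ → V → Strat),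
    S₀.Finite ∧
    Function.Surjective α ∧
    (∀ v ∈ S₀, σ 0 v = Strat.A) ∧
    (∀ v ∉ S₀, σ 0 v = Strat.B) ∧
    (∀ n, IsBestResponse G q r (σ n) (α n) (σ (n + 1) (α n))) ∧
    (∀ n v, v ≠ α n → σ (n + 1) v = σ n v) ∧
    (∀ v, ∃ n, σ n v = Strat.A)

/-- The epidemic region `Ω_G ⊆ ℝ²` of `G`. -/
def epidemicRegion (G : SimpleGraph V) : Set (ℝ × ℝ) :=
  {p | 0 < p.1 ∧ p.1 < 1 ∧ 0 < p.2 ∧ Epidemic G p.1 p.2}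

/-- `G` is `Δ`-regular: every vertex has exactly `Δ` neighbors. -/
def IsRegular (G : SimpleGraph V) (Δ : ℕ) : Prop :=
  ∀ v, (G.neighborSet v).ncard = Δ

/-- The number of neighbors of `v` lying in the set `S`. -/
noncomputable def degIn (G : SimpleGraph V) (v : V) (S : Set V) : ℕ :=
  (G.neighborSet v ∩ S).ncard

/-- `RT Δ`: the infinite rooted tree in which the root (the empty list) has `Δ - 1`
children and every other vertex also has `Δ - 1` children (hence degree `Δ`). -/
def RT (Δ : ℕ) : SimpleGraph (List (Fin (Δ - 1))) :=
  SimpleGraph.fromRel (fun l l' => ∃ a : Fin (Δ - 1), l' = a :: l)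

/-- `G` contains a subgraph isomorphic to `RT Δ`. -/
def HasRTCopy (Δ : ℕ) (G : SimpleGraph V) : Prop :=
  ∃ f : List (Fin (Δ - 1)) → V,
    Function.Injective f ∧ ∀ x y, (RT Δ).Adj x y → G.Adj (f x) (f y)

/-- The thick half line `HL_Δ` (for even `Δ`), columns indexed by `ℕ` starting with the
first column `0`; `(k, i)` and `(l, j)` are adjacent exactly when `|k - l| = 1`. -/
def HL (Δ : ℕ) : SimpleGraph (ℕ × Fin (Δ / 2)) :=
  SimpleGraph.fromRel (fun x y => y.1 = x.1 + 1)

/-- The epidemic region of the infinite `Δ`-regular tree: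
`{(q,r) : q,r > 0, r ≥ ((Δ-1)/Δ)q, q ≤ 1/Δ} ∪ {(q,r) : q,r > 0, 2q + Δr ≤ 1}`. -/
def treeRegion (Δ : ℕ) : Set (ℝ × ℝ) :=
  {p | 0 < p.1 ∧ 0 < p.2 ∧ ((Δ : ℝ) - 1) / Δ * p.1 ≤ p.2 ∧ p.1 ≤ 1 / Δ} ∪
  {p | 0 < p.1 ∧ 0 < p.2 ∧ 2 * p.1 + Δ * p.2 ≤ 1}

/-- The epidemic region of the thick line `L_Δ`:
`{(q,r) : 0 < q ≤ 1/2, r ≥ q/2} ∪ {(q,r) : q,r > 0, r ≤ q/2, 2q + 2r ≤ 1}`. -/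
def thickLineRegion : Set (ℝ × ℝ) :=
  {p | 0 < p.1 ∧ p.1 ≤ 1 / 2 ∧ p.1 / 2 ≤ p.2} ∪
  {p | 0 < p.1 ∧ 0 < p.2 ∧ p.2 ≤ p.1 / 2 ∧ 2 * p.1 + 2 * p.2 ≤ 1}

/-- `(SAB, SB)` is a blocking structure for the contagion game `(G, q, r)`
on a `Δ`-regular graph `G`. -/
def IsBlockingStructure (G : SimpleGraph V) (Δ : ℕ) (q r : ℝ) (SAB SB : Set V) : Prop :=
  Disjoint SAB SB ∧ (SAB.Nonempty ∨ SB.Nonempty) ∧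
  (∀ v ∈ SAB, r / q * Δ < (degIn G v SB : ℝ)) ∧
  ∀ v ∈ SB,
    (1 - q - r) * Δ < (1 - q) * (degIn G v SB : ℝ) + min q (1 - q) * (degIn G v SAB : ℝ) ∧
    (1 - q) * Δ < (degIn G v SB : ℝ) + q * (degIn G v SAB : ℝ)

/-- The two strategies of the `A`-`B` coordination game. -/
inductive CStrat
  | A | B
deriving DecidableEq

/-- Pairwise payoff in the `A`-`B` coordination game `(G, q)`. -/
noncomputable def cPairPayoff (q : ℝ) : CStrat → CStrat → ℝ
  | .A, .A => 1 - q
  | .A, .B => 0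
  | .B, .A => 0
  | .B, .B => q

/-- Total payoff to `v` for playing `s` against profile `σ` in the coordination game. -/
noncomputable def cTotalPayoff (G : SimpleGraph V) (q : ℝ) (σ : V → CStrat)
    (v : V) (s : CStrat) : ℝ :=
  ∑ᶠ u ∈ G.neighborSet v, cPairPayoff q s (σ u)

/-- `s` is a best response of `v` to `σ` in the coordination game. -/
def CIsBestResponse (G : SimpleGraph V) (q : ℝ) (σ : V → CStrat) (v : V) (s : CStrat) : Prop :=
  ∀ s' : CStrat, cTotalPayoff G q σ v s' ≤ cTotalPayoff G q σ v s

/-- Strategy `A` becomes epidemic in the coordination game `(G, q)` starting from the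
initial set `S₀`. -/
def CoordEpidemicFrom (G : SimpleGraph V) (q : ℝ) (S₀ : Set V) : Prop :=
  ∃ (α : ℕ → V) (σ : ℕ → V → CStrat),
    Function.Surjective α ∧
    (∀ v ∈ S₀, σ 0 v = CStrat.A) ∧
    (∀ v ∉ S₀, σ 0 v = CStrat.B) ∧
    (∀ n, CIsBestResponse G q (σ n) (α n) (σ (n + 1) (α n))) ∧
    (∀ n v, v ≠ α n → σ (n + 1) v = σ n v) ∧
    (∀ v, ∃ n, σ n v = CStrat.A)

/-- Strategy `A` becomes epidemic in the coordination game `(G, q)`. -/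
def CoordEpidemic (G : SimpleGraph V) (q : ℝ) : Prop :=
  ∃ S₀ : Set V, S₀.Finite ∧ CoordEpidemicFrom G q S₀

noncomputable def countPayoff (q r : ℝ) (s : Strat) (a b c : ℝ) : ℝ :=
  a * pairPayoff q r s .A + b * pairPayoff q r s .B + c * pairPayoff q r s .AB

section Arithmetic

variable {q r : ℝ}

lemma half_lt_or_of_not_mem_thickLineRegion (hq : 0 < q) (hr : 0 < r)
    (hqr : (q, r) ∉ thickLineRegion) :
    1 / 2 < q ∨ (q ≤ 1 / 2 ∧ r < q / 2 ∧ 1 < 2 * q + 2 * r) := by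
  simp only [thickLineRegion, Set.mem_union, Set.mem_ofPred_eq, not_or, not_and, not_le] at hqr
  rcases le_or_gt q (1 / 2) with hq2 | hq2
  · have hrq := hqr.1 hq hq2
    exact Or.inr ⟨hq2, hrq, hqr.2 hq hr hrq.le⟩
  · exact Or.inl hq2

lemma exists_countPayoff_A_lt (hq : 0 < q) (hr : 0 < r) (hqr : (q, r) ∉ thickLineRegion)
    {a b c : ℝ} (ha : 0 ≤ a) (hc : 0 ≤ c) (hb : 0 < b) (habc : a + c ≤ b) :
    ∃ s, countPayoff q r .A a b c < countPayoff q r s a b c := by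
  rcases half_lt_or_of_not_mem_thickLineRegion hq hr hqr with hq2 | ⟨hq2, hrq, -⟩
  · refine ⟨.B, ?_⟩
    simp only [countPayoff, pairPayoff]
    nlinarith
  · refine ⟨.AB, ?_⟩
    simp only [countPayoff, pairPayoff]
    rw [max_eq_right (by linarith)]
    nlinarith

lemma countPayoff_AB_lt_B (hq : 0 < q) (hr : 0 < r) (hqr : (q, r) ∉ thickLineRegion)
    {b c : ℝ} (hc : 0 ≤ c) (hb : 0 < b) (hcb : c ≤ b) :
    countPayoff q r .AB 0 b c < countPayoff q r .B 0 b c := by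
  simp only [countPayoff, pairPayoff]
  rcases half_lt_or_of_not_mem_thickLineRegion hq hr hqr with hq2 | ⟨hq2, -, hsum⟩
  · rw [max_eq_left (by linarith)]
    nlinarith
  · rw [max_eq_right (by linarith)]
    rcases le_total 0 (1 - 2 * q - r) with hpos | hneg
    · nlinarith [mul_le_mul_of_nonneg_left hcb hpos]
    · nlinarith [mul_nonpos_of_nonpos_of_nonneg hneg hc]

end Arithmetic

section Counting

open Finset

lemma sum_comp_strat (s : Finset V) (τ : V → Strat) (f : Strat → ℝ) :
    ∑ u ∈ s, f (τ u) =
      #{u ∈ s | τ u = .A} * f .A + #{u ∈ s | τ u = .B} * f .B +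
        #{u ∈ s | τ u = .AB} * f .AB := by
  classical
  induction s using Finset.induction with
  | empty => simp
  | insert a s ha ih =>
    rw [sum_insert ha, filter_insert, filter_insert, filter_insert, ih]
    have hnot (p : V → Prop) [DecidablePred p] : a ∉ s.filter p :=
      fun h => ha (mem_of_mem_filter a h)
    cases τ a <;> simp [card_insert_of_notMem (hnot _)] <;> ring

variable {G : SimpleGraph V} {v : V}

lemma degIn_eq_card_filter (hfin : (G.neighborSet v).Finite) (S : Set V)
    [DecidablePred (· ∈ S)] :
    degIn G v S = #{u ∈ hfin.toFinset | u ∈ S} := by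
  rw [degIn, ← Set.ncard_coe_finset, coe_filter]
  simp only [Set.Finite.mem_toFinset]
  rfl

lemma degIn_mono (hfin : (G.neighborSet v).Finite) {S T : Set V} (hST : S ⊆ T) :
    degIn G v S ≤ degIn G v T :=
  Set.ncard_le_ncard (Set.inter_subset_inter_right _ hST) (hfin.inter_of_left T)

lemma totalPayoff_eq_countPayoff (hfin : (G.neighborSet v).Finite) (q r : ℝ) (τ : V → Strat)
    (s : Strat) :
    totalPayoff G q r τ v s = countPayoff q r s (degIn G v {u | τ u = .A})
      (degIn G v {u | τ u = .B}) (degIn G v {u | τ u = .AB}) := by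
  classical
  simp only [degIn_eq_card_filter hfin, Set.mem_ofPred_eq]
  rw [totalPayoff, finsum_mem_eq_finite_toFinset_sum _ hfin, sum_comp_strat, countPayoff]

lemma degIn_A_add_degIn_B_add_degIn_AB (hfin : (G.neighborSet v).Finite) (τ : V → Strat) :
    degIn G v {u | τ u = .A} + degIn G v {u | τ u = .B} + degIn G v {u | τ u = .AB} =
      (G.neighborSet v).ncard := by
  classical
  have h := sum_comp_strat hfin.toFinset τ (fun _ => 1)
  simp only [sum_const, nsmul_eq_mul, mul_one] at h
  rw [Set.ncard_eq_toFinset_card _ hfin, degIn_eq_card_filter hfin, degIn_eq_card_filter hfin,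
    degIn_eq_card_filter hfin]
  exact_mod_cast h.symm

lemma neighborSet_subset_union_of_degIn_add_degIn (hfin : (G.neighborSet v).Finite)
    {S T : Set V} (hST : Disjoint S T)
    (hdeg : degIn G v S + degIn G v T = (G.neighborSet v).ncard) :
    G.neighborSet v ⊆ S ∪ T := by
  have hcard : (G.neighborSet v ∩ (S ∪ T)).ncard = (G.neighborSet v).ncard := by
    rw [Set.inter_union_distrib_left, Set.ncard_union_eq
      (hST.mono Set.inter_subset_right Set.inter_subset_right) (hfin.inter_of_left S)
      (hfin.inter_of_left T)]
    exact hdeg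
  exact Set.inter_eq_left.mp (Set.eq_of_subset_of_ncard_le Set.inter_subset_left hcard.ge hfin)

end Counting

section BestResponse

variable {G : SimpleGraph V} {Δ : ℕ} {q r : ℝ} {τ : V → Strat} {v : V} {s : Strat}

lemma ne_A_of_isBestResponse (hq : 0 < q) (hr : 0 < r) (hqr : (q, r) ∉ thickLineRegion)
    (hΔ : 0 < Δ) (hEven : Even Δ) (hdeg : (G.neighborSet v).ncard = Δ)
    (hB : Δ / 2 ≤ degIn G v {u | τ u = .B}) (hbr : IsBestResponse G q r τ v s) : s ≠ .A := by
  rintro rfl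
  have hfin : (G.neighborSet v).Finite := Set.finite_of_ncard_pos (hdeg ▸ hΔ)
  have hsum := degIn_A_add_degIn_B_add_degIn_AB hfin τ
  set a := degIn G v {u | τ u = .A}
  set b := degIn G v {u | τ u = .B}
  set c := degIn G v {u | τ u = .AB}
  obtain ⟨k, rfl⟩ := hEven
  have hb : (0 : ℝ) < b := by norm_cast; omega
  have habc : (a + c : ℝ) ≤ b := by norm_cast; omega
  obtain ⟨s', hs'⟩ :=
    exists_countPayoff_A_lt hq hr hqr (Nat.cast_nonneg a) (Nat.cast_nonneg c) hb habc
  rw [← totalPayoff_eq_countPayoff hfin, ← totalPayoff_eq_countPayoff hfin] at hs'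
  exact (hbr s').not_gt hs'

lemma eq_B_of_isBestResponse (hq : 0 < q) (hr : 0 < r) (hqr : (q, r) ∉ thickLineRegion)
    (hΔ : 0 < Δ) (hEven : Even Δ) (hdeg : (G.neighborSet v).ncard = Δ)
    (hA : degIn G v {u | τ u = .A} = 0) (hB : Δ / 2 ≤ degIn G v {u | τ u = .B})
    (hbr : IsBestResponse G q r τ v s) : s = .B := by
  have hfin : (G.neighborSet v).Finite := Set.finite_of_ncard_pos (hdeg ▸ hΔ)
  have hsum := degIn_A_add_degIn_B_add_degIn_AB hfin τ
  set b := degIn G v {u | τ u = .B}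
  set c := degIn G v {u | τ u = .AB}
  obtain ⟨k, rfl⟩ := hEven
  cases s with
  | A => exact absurd rfl (ne_A_of_isBestResponse hq hr hqr hΔ ⟨k, rfl⟩ hdeg hB hbr)
  | B => rfl
  | AB =>
    have hb : (0 : ℝ) < b := by norm_cast; omega
    have hcb : (c : ℝ) ≤ b := by norm_cast; omega
    have hlt := countPayoff_AB_lt_B hq hr hqr (Nat.cast_nonneg c) hb hcb
    rw [← Nat.cast_zero, ← hA, ← totalPayoff_eq_countPayoff hfin,
      ← totalPayoff_eq_countPayoff hfin] at hlt
    exact absurd (hbr .B) hlt.not_ge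

end BestResponse

def IsBlockingProfile (SB SAB : Set V) (τ : V → Strat) : Prop :=
  (∀ v ∈ SB, τ v = .B) ∧ ∀ v ∈ SAB, τ v ≠ .A

section Blocking

variable {G : SimpleGraph V} {Δ : ℕ} {q r : ℝ} {SB SAB : Set V}

lemma IsBlockingProfile.update [DecidableEq V] (hq : 0 < q) (hr : 0 < r)
    (hqr : (q, r) ∉ thickLineRegion) (hΔ : 0 < Δ) (hEven : Even Δ) (hReg : IsRegular G Δ)
    (hdisj : Disjoint SB SAB) (hSAB : ∀ v ∈ SAB, Δ / 2 ≤ degIn G v SB)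
    (hSB : ∀ u ∈ SB, degIn G u SB = Δ / 2 ∧ degIn G u SAB = Δ / 2)
    {τ : V → Strat} (hτ : IsBlockingProfile SB SAB τ) {v : V} {s : Strat}
    (hbr : IsBestResponse G q r τ v s) : IsBlockingProfile SB SAB (Function.update τ v s) := by
  obtain ⟨hτB, hτAB⟩ := hτ
  have hfin (w : V) : (G.neighborSet w).Finite := Set.finite_of_ncard_pos ((hReg w).symm ▸ hΔ)
  have hdegB (w : V) : degIn G w SB ≤ degIn G w {u | τ u = .B} := degIn_mono (hfin w) hτB
  constructor
  · intro w hw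
    rcases eq_or_ne w v with rfl | hwv
    · rw [Function.update_self]
      have hcover : G.neighborSet w ⊆ SB ∪ SAB := by
        refine neighborSet_subset_union_of_degIn_add_degIn (hfin w) hdisj ?_
        obtain ⟨k, rfl⟩ := hEven
        rw [(hSB w hw).1, (hSB w hw).2, hReg w]
        omega
      have hnoA : degIn G w {u | τ u = .A} = 0 := by
        rw [degIn, Set.ncard_eq_zero ((hfin w).inter_of_left _), Set.eq_empty_iff_forall_notMem]
        rintro u ⟨hu, hA : τ u = .A⟩
        rcases hcover hu with h | h
        · exact Strat.noConfusion (hA.symm.trans (hτB u h))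
        · exact hτAB u h hA
      exact eq_B_of_isBestResponse hq hr hqr hΔ hEven (hReg w) hnoA
        ((hSB w hw).1 ▸ hdegB w) hbr
    · rw [Function.update_of_ne hwv]
      exact hτB w hw
  · intro w hw
    rcases eq_or_ne w v with rfl | hwv
    · rw [Function.update_self]
      exact ne_A_of_isBestResponse hq hr hqr hΔ hEven (hReg w) ((hSAB w hw).trans (hdegB w)) hbr
    · rw [Function.update_of_ne hwv]
      exact hτAB w hw

lemma not_epidemic_of_not_mem_thickLineRegion (hq : 0 < q) (hr : 0 < r)
    (hqr : (q, r) ∉ thickLineRegion) (hΔ : 0 < Δ) (hEven : Even Δ) (hReg : IsRegular G Δ)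
    (hblock : ∀ C : Set V, C.Finite →
      ∃ SB SAB : Set V, SB.Nonempty ∧ SAB.Nonempty ∧ Disjoint SB SAB ∧
        SB ⊆ Cᶜ ∧ SAB ⊆ Cᶜ ∧
        (∀ v ∈ SAB, Δ / 2 ≤ degIn G v SB) ∧
        (∀ u ∈ SB, degIn G u SB = Δ / 2 ∧ degIn G u SAB = Δ / 2)) :
    ¬ Epidemic G q r := by
  classical
  rintro ⟨S₀, α, σ, hS₀, -, hA₀, hB₀, hbr, hstay, hall⟩
  obtain ⟨SB, SAB, ⟨v, hv⟩, -, hdisj, hSBC, hSABC, hSAB, hSB⟩ := hblock S₀ hS₀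
  have hσ (n : ℕ) : IsBlockingProfile SB SAB (σ n) := by
    induction n with
    | zero => exact ⟨fun w hw => hB₀ w (hSBC hw), fun w hw => by simp [hB₀ w (hSABC hw)]⟩
    | succ n ih =>
      have hupdate : σ (n + 1) = Function.update (σ n) (α n) (σ (n + 1) (α n)) := by
        funext w
        rcases eq_or_ne w (α n) with rfl | hw
        · rw [Function.update_self]
        · rw [Function.update_of_ne hw, hstay n w hw]
      rw [hupdate]
      exact ih.update hq hr hqr hΔ hEven hReg hdisj hSAB hSB (hbr n)
  obtain ⟨n, hn⟩ := hall v
  exact Strat.noConfusion (hn.symm.trans ((hσ n).1 v hv))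

end Blocking

theorem region_subset_thickLine_general {V : Type*} (Δ : ℕ) (hΔ : 4 ≤ Δ) (hEven : Even Δ)
    (G : SimpleGraph V) (hReg : IsRegular G Δ)
    (h1 : ∀ C : Set V, C.Finite →
      ∃ SB SAB : Set V, SB.Nonempty ∧ SAB.Nonempty ∧ Disjoint SB SAB ∧
        SB ⊆ Cᶜ ∧ SAB ⊆ Cᶜ ∧
        (∀ v ∈ SAB, Δ / 2 ≤ degIn G v SB) ∧
        (∀ u ∈ SB, degIn G u SB = Δ / 2 ∧ degIn G u SAB = Δ / 2)) :
    epidemicRegion G ⊆ thickLineRegion := by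
  rintro ⟨q, r⟩ ⟨hq, -, hr, hepi⟩
  by_contra hqr
  exact not_epidemic_of_not_mem_thickLineRegion hq hr hqr (by omega) hEven hReg h1 hepi

/-- Corollary: Let `Δ ≥ 4` be even and `G` a connected infinite `Δ`-regular
graph such that for every finite `C ⊆ V(G)` one can find disjoint nonempty
`S_B, S_AB ⊆ V(G) - C` with `deg_{S_B}(v) ≥ Δ/2` for all `v ∈ S_AB` and
`deg_{S_B}(u) = deg_{S_AB}(u) = Δ/2` for all `u ∈ S_B`, and `G - C` has a `(Δ/2)`-regular
subgraph.  Then `Ω_G ⊆ Ω_{L_Δ}`. -/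
theorem region_subset_thickLine {V : Type*} (Δ : ℕ) (hΔ : 4 ≤ Δ) (hEven : Even Δ)
    (G : SimpleGraph V) (hInf : Infinite V) (hConn : G.Connected) (hReg : IsRegular G Δ)
    (h1 : ∀ C : Set V, C.Finite →
      ∃ SB SAB : Set V, SB.Nonempty ∧ SAB.Nonempty ∧ Disjoint SB SAB ∧
        SB ⊆ Cᶜ ∧ SAB ⊆ Cᶜ ∧
        (∀ v ∈ SAB, Δ / 2 ≤ degIn G v SB) ∧
        (∀ u ∈ SB, degIn G u SB = Δ / 2 ∧ degIn G u SAB = Δ / 2))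
    (h2 : ∀ C : Set V, C.Finite →
      ∃ H : G.Subgraph, H.verts.Nonempty ∧ H.verts ⊆ Cᶜ ∧
        ∀ v ∈ H.verts, (H.neighborSet v).ncard = Δ / 2) :
    epidemicRegion G ⊆ thickLineRegion :=
  region_subset_thickLine_general Δ hΔ hEven G hReg h1

end Contagion
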